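/- In a C4-free graph, a clique is strong if and only if it is simplicial, i.e., equals the closed neighborhood N[v] of some vertex v. -/

import Mathlib

variable {V : Type*} [Fintype V] [DecidableEq V]

/-- `S` is an independent set in `G`. -/
def IsIndep (G : SimpleGraph V) (S : Finset V) : Prop :=
  ∀ ⦃u⦄, u ∈ S → ∀ ⦃v⦄, v ∈ S → ¬ G.Adj u v

/-- `S` is a maximal independent set in `G`. -/
def MaxIndep (G : SimpleGraph V) (S : Finset V) : Prop :=
  IsIndep G S ∧ ∀ T, IsIndep G T → S ⊆ T → T = S

/-- `C` is a strong clique in `G`: a clique meeting every maximal independent set. -/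
def IsStrongClique (G : SimpleGraph V) (C : Finset V) : Prop :=
  G.IsClique ↑C ∧ ∀ S, MaxIndep G S → (C ∩ S).Nonempty

/-- `G` is localizable: its vertex set partitions into strong cliques. -/
def Localizable (G : SimpleGraph V) : Prop :=
  ∃ (k : ℕ) (C : Fin k → Finset V), (∀ j, IsStrongClique G (C j)) ∧ ∀ v, ∃! j, v ∈ C j

/-- The independence number `α(G)`. -/
noncomputable def alpha (G : SimpleGraph V) : ℕ :=
  sSup {n | ∃ S : Finset V, IsIndep G S ∧ S.card = n}

/-- The independent domination number `i(G)`. -/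
noncomputable def indomNum (G : SimpleGraph V) : ℕ :=
  sInf {n | ∃ S : Finset V, MaxIndep G S ∧ S.card = n}

/-- The clique cover number `θ(G)`. -/
noncomputable def theta (G : SimpleGraph V) : ℕ :=
  sInf {n | ∃ C : Fin n → Finset V, (∀ j, G.IsClique ↑(C j)) ∧ ∀ v, ∃! j, v ∈ C j}

/-- `G` is well-covered: all maximal independent sets have the same size. -/
def WellCovered (G : SimpleGraph V) : Prop :=
  ∀ S T, MaxIndep G S → MaxIndep G T → S.card = T.card

/-- `G` has no induced cycle on four vertices. -/
def C4Free (G : SimpleGraph V) : Prop :=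
  ¬ ∃ a b c d : V, a ≠ c ∧ b ≠ d ∧ G.Adj a b ∧ G.Adj b c ∧ G.Adj c d ∧ G.Adj d a ∧
      ¬ G.Adj a c ∧ ¬ G.Adj b d

/-!
A closed neighbourhood `N[v]` meets every maximal independent set `S`: either `v ∈ S` or, by
maximality, `v` has a neighbour in `S`.

Conversely, let `C` be a clique that is not simplicial, so every `v ∈ C` has a neighbour outside
`C`. Among the independent sets disjoint from `C`, take one, `S`, whose set of neighbours in `C` is
maximal. If some `v ∈ C` had no neighbour in `S`, pick a neighbour `u ∉ C` of `v` and replace `S`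
by `u` together with the non-neighbours of `u` in `S`. A vertex `c ∈ C` adjacent to some `s ∈ S`
with `s ~ u` is adjacent to `u`, since otherwise `v u s c` would be an induced `C₄`; so this
swap dominates strictly more of `C`. Hence `S` dominates `C`, and any maximal independent set
containing `S` misses `C`.
-/

section

variable {α : Type*} {G : SimpleGraph α} {S C : Finset α} {u v : α}

theorem IsIndep.mono {T : Finset α} (hS : IsIndep G S) (hTS : T ⊆ S) : IsIndep G T :=
  fun _ hx _ hy => hS (hTS hx) (hTS hy)

theorem IsIndep.insert [DecidableEq α] (hS : IsIndep G S) (hu : ∀ s ∈ S, ¬ G.Adj u s) :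
    IsIndep G (insert u S) := by
  intro x hx y hy hxy
  rcases Finset.mem_insert.1 hx with rfl | hxS <;> rcases Finset.mem_insert.1 hy with rfl | hyS
  · exact G.irrefl hxy
  · exact hu y hyS hxy
  · exact hu x hxS hxy.symm
  · exact hS hxS hyS hxy

theorem maxIndep_iff_maximal : MaxIndep G S ↔ Maximal (IsIndep G) S :=
  and_congr_right fun _ =>
    ⟨fun h _ hT hST => (h _ hT hST).le, fun h _ hT hST => le_antisymm (h hT hST) hST⟩

theorem IsIndep.exists_maxIndep_superset [Fintype α] (hS : IsIndep G S) :
    ∃ T, S ⊆ T ∧ MaxIndep G T := by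
  obtain ⟨T, hST, hT⟩ := Finite.exists_le_maximal hS
  exact ⟨T, hST, maxIndep_iff_maximal.2 hT⟩

theorem MaxIndep.exists_adj_of_notMem [DecidableEq α] (hS : MaxIndep G S) (hv : v ∉ S) :
    ∃ s ∈ S, G.Adj v s := by
  by_contra! h
  exact hv (hS.2 _ (hS.1.insert h) (Finset.subset_insert v S) ▸ Finset.mem_insert_self v S)

theorem MaxIndep.insert_neighborFinset_inter_nonempty [Fintype α] [DecidableEq α]
    [DecidableRel G.Adj] (hS : MaxIndep G S) (v : α) :
    (insert v (G.neighborFinset v) ∩ S).Nonempty := by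
  by_cases hv : v ∈ S
  · exact ⟨v, Finset.mem_inter.2 ⟨Finset.mem_insert_self _ _, hv⟩⟩
  · obtain ⟨s, hs, hvs⟩ := hS.exists_adj_of_notMem hv
    exact ⟨s, Finset.mem_inter.2
      ⟨Finset.mem_insert_of_mem ((G.mem_neighborFinset v s).2 hvs), hs⟩⟩

theorem eq_insert_neighborFinset_of_isClique [Fintype α] [DecidableEq α] [DecidableRel G.Adj]
    (hC : G.IsClique (C : Set α)) (hv : v ∈ C) (hN : G.neighborFinset v ⊆ C) :
    C = insert v (G.neighborFinset v) := by
  refine le_antisymm (fun c hc => ?_) (Finset.insert_subset hv hN)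
  rcases eq_or_ne v c with rfl | hvc
  · exact Finset.mem_insert_self _ _
  · exact Finset.mem_insert_of_mem ((G.mem_neighborFinset v c).2 (hC hv hc hvc))

theorem C4Free.adj_of_mem_commonNeighbors {s c : α} (hG : C4Free G) (hvs : v ≠ s)
    (hnvs : ¬ G.Adj v s) (hu : u ∈ G.commonNeighbors v s) (hc : c ∈ G.commonNeighbors v s)
    (huc : u ≠ c) : G.Adj u c := by
  rw [SimpleGraph.mem_commonNeighbors] at hu hc
  by_contra hnuc
  exact hG ⟨v, u, s, c, hvs, huc, hu.1, hu.2.symm, hc.2, hc.1.symm, hnvs, hnuc⟩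

def dominatedBy (G : SimpleGraph α) [DecidableRel G.Adj] (S C : Finset α) : Finset α :=
  C.filter fun c => ∃ s ∈ S, G.Adj c s

theorem mem_dominatedBy [DecidableRel G.Adj] {c : α} :
    c ∈ dominatedBy G S C ↔ c ∈ C ∧ ∃ s ∈ S, G.Adj c s :=
  Finset.mem_filter

theorem C4Free.dominatedBy_ssubset_swap [DecidableEq α] [DecidableRel G.Adj] (hG : C4Free G)
    (hC : G.IsClique (C : Set α)) (hSC : Disjoint S C) (hv : v ∈ C) (hvS : ∀ s ∈ S, ¬ G.Adj v s)
    (hvu : G.Adj v u) (huC : u ∉ C) :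
    dominatedBy G S C ⊂ dominatedBy G (insert u (S.filter fun s => ¬ G.Adj u s)) C := by
  refine Finset.ssubset_iff_of_subset (fun c hc => ?_) |>.2
    ⟨v, mem_dominatedBy.2 ⟨hv, u, Finset.mem_insert_self _ _, hvu⟩,
      fun h => by obtain ⟨-, s, hs, hvs⟩ := mem_dominatedBy.1 h; exact hvS s hs hvs⟩
  obtain ⟨hcC, s, hs, hcs⟩ := mem_dominatedBy.1 hc
  refine mem_dominatedBy.2 ⟨hcC, ?_⟩
  by_cases hus : G.Adj u s
  · have hcv : v ≠ c := by rintro rfl; exact hvS s hs hcs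
    have hsC : s ∉ C := Finset.disjoint_left.1 hSC hs
    refine ⟨u, Finset.mem_insert_self _ _, (hG.adj_of_mem_commonNeighbors ?_ (hvS s hs)
      ⟨hvu, hus.symm⟩ ⟨hC hv hcC hcv, hcs.symm⟩ ?_).symm⟩
    · rintro rfl; exact hsC hv
    · rintro rfl; exact huC hcC
  · exact ⟨s, Finset.mem_insert_of_mem (Finset.mem_filter.2 ⟨hs, hus⟩), hcs⟩

theorem C4Free.exists_isIndep_dominating [Fintype α] [DecidableEq α] [DecidableRel G.Adj]
    (hG : C4Free G) (hC : G.IsClique (C : Set α)) (hout : ∀ v ∈ C, ∃ u, G.Adj v u ∧ u ∉ C) :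
    ∃ S, IsIndep G S ∧ ∀ v ∈ C, ∃ s ∈ S, G.Adj v s := by
  obtain ⟨S, ⟨hS, hSC⟩, hmax⟩ := Set.Finite.exists_maximalFor (dominatedBy G · C)
    {S | IsIndep G S ∧ Disjoint S C} (Set.toFinite _)
    ⟨∅, fun _ h => absurd h (Finset.notMem_empty _), Finset.disjoint_empty_left C⟩
  refine ⟨S, hS, fun v hv => ?_⟩
  by_contra! hvS
  obtain ⟨u, hvu, huC⟩ := hout v hv
  have hswap := hG.dominatedBy_ssubset_swap hC hSC hv hvS hvu huC
  refine hswap.not_subset (hmax ⟨?_, ?_⟩ hswap.subset)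
  · exact (hS.mono (Finset.filter_subset _ S)).insert fun s hs => (Finset.mem_filter.1 hs).2
  · exact Finset.disjoint_insert_left.2
      ⟨huC, Finset.disjoint_of_subset_left (Finset.filter_subset _ S) hSC⟩

theorem IsStrongClique.exists_neighborFinset_subset [Fintype α] [DecidableEq α]
    [DecidableRel G.Adj] (hG : C4Free G) (hC : IsStrongClique G C) :
    ∃ v ∈ C, G.neighborFinset v ⊆ C := by
  by_contra! hout
  simp only [Finset.not_subset, SimpleGraph.mem_neighborFinset] at hout
  obtain ⟨S, hS, hdom⟩ := hG.exists_isIndep_dominating hC.1 hout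
  obtain ⟨T, hST, hT⟩ := hS.exists_maxIndep_superset
  obtain ⟨c, hc⟩ := hC.2 T hT
  obtain ⟨s, hs, hcs⟩ := hdom c (Finset.mem_inter.1 hc).1
  exact hT.1 (Finset.mem_inter.1 hc).2 (hST hs) hcs

end

theorem strong_iff_simplicial_of_C4Free (G : SimpleGraph V) [DecidableRel G.Adj]
    (hG : C4Free G) (C : Finset V) (hC : G.IsClique ↑C) :
    IsStrongClique G C ↔ ∃ v : V, C = insert v (G.neighborFinset v) := by
  constructor
  · intro hstrong
    obtain ⟨v, hv, hN⟩ := hstrong.exists_neighborFinset_subset hG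
    exact ⟨v, eq_insert_neighborFinset_of_isClique hC hv hN⟩
  · rintro ⟨v, rfl⟩
    exact ⟨hC, fun S hS => hS.insert_neighborFinset_inter_nonempty v⟩
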